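/- Let S ∈ ℝ^{n×n} be skew-symmetric (Sᵀ = −S), let μ_max be the maximum of the absolute values of the (complex) eigenvalues of S, and let ω > 0. Then the spectral norm of ωI − S equals √(ω² + μ_max²), i.e., ‖ωI − S‖ = √(ω² + μ_max²). -/

import Mathlib

open Matrix Filter

/-- Componentwise absolute value of a vector in Euclidean space. -/
noncomputable def vabs {n : ℕ} (x : EuclideanSpace ℝ (Fin n)) : EuclideanSpace ℝ (Fin n) :=
  WithLp.toLp 2 (fun i => |x i|)

/-- A matrix acting on Euclidean space (so that vector norms are the Euclidean 2-norm). -/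
noncomputable def mulV {n : ℕ} (M : Matrix (Fin n) (Fin n) ℝ) (x : EuclideanSpace ℝ (Fin n)) :
    EuclideanSpace ℝ (Fin n) :=
  Matrix.toEuclideanCLM (𝕜 := ℝ) M x

/-- Spectral norm of a real matrix: the operator norm induced by the Euclidean vector norm. -/
noncomputable def spec {n : ℕ} (M : Matrix (Fin n) (Fin n) ℝ) : ℝ :=
  ‖Matrix.toEuclideanCLM (𝕜 := ℝ) M‖

/-- The GAVE residual function `F(x) = A x − B |x| − b`. -/
noncomputable def gaveF {n : ℕ} (A B : Matrix (Fin n) (Fin n) ℝ)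
    (b : EuclideanSpace ℝ (Fin n)) (x : EuclideanSpace ℝ (Fin n)) : EuclideanSpace ℝ (Fin n) :=
  mulV A x - mulV B (vabs x) - b

/-- The AVE residual function `A x − |x| − b` (the GAVE with `B = I`). -/
noncomputable def aveF {n : ℕ} (A : Matrix (Fin n) (Fin n) ℝ)
    (b : EuclideanSpace ℝ (Fin n)) (x : EuclideanSpace ℝ (Fin n)) : EuclideanSpace ℝ (Fin n) :=
  mulV A x - vabs x - b

/-- A sequence converges linearly to `xs`: the distances to `xs` contract by a fixed
factor `c < 1` at every step, and the sequence tends to `xs`. -/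
def ConvergesLinearlyTo {n : ℕ} (x : ℕ → EuclideanSpace ℝ (Fin n))
    (xs : EuclideanSpace ℝ (Fin n)) : Prop :=
  (∃ c : ℝ, 0 ≤ c ∧ c < 1 ∧ ∀ k : ℕ, ‖x (k + 1) - xs‖ ≤ c * ‖x k - xs‖) ∧
    Tendsto x atTop (nhds xs)

/-!
For skew-symmetric `S` the vectors `x` and `S x` are orthogonal, so
`‖(ω - S) x‖² = ω² ‖x‖² + ‖S x‖²` and hence `‖ω - S‖² = ω² + ‖S‖²`. The spectral norm of `S`
equals that of its complexification, which is skew-Hermitian, hence normal, so its norm is its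
spectral radius `μ_max`.
-/

open scoped RealInnerProductSpace

namespace ContinuousLinearMap

variable {𝕜 E F : Type*} [NontriviallyNormedField 𝕜] [SeminormedAddCommGroup E]
  [SeminormedAddCommGroup F] [NormedSpace 𝕜 E] [NormedSpace 𝕜 F] (f : E →L[𝕜] F)

theorem norm_apply_sq_le (x : E) : ‖f x‖ ^ 2 ≤ ‖f‖ ^ 2 * ‖x‖ ^ 2 := by
  rw [← mul_pow]
  exact pow_le_pow_left₀ (norm_nonneg _) (f.le_opNorm x) 2

theorem opNorm_sq_le_of_forall_norm_sq_le {C : ℝ} (hC : 0 ≤ C)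
    (h : ∀ x, ‖f x‖ ^ 2 ≤ C * ‖x‖ ^ 2) : ‖f‖ ^ 2 ≤ C := by
  rw [← Real.le_sqrt (norm_nonneg f) hC]
  refine f.opNorm_le_bound (Real.sqrt_nonneg C) fun x => ?_
  rw [← Real.sqrt_sq (norm_nonneg x), ← Real.sqrt_mul hC]
  exact Real.le_sqrt_of_sq_le (h x)

end ContinuousLinearMap

section SkewAdjoint

variable {E : Type*} [NormedAddCommGroup E] [InnerProductSpace ℝ E] [CompleteSpace E]
  {T : E →L[ℝ] E}

theorem inner_apply_self_eq_zero_of_star_eq_neg (hT : star T = -T) (x : E) : ⟪T x, x⟫ = 0 := by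
  have h : ⟪T x, x⟫ = ⟪x, star T x⟫ := (T.adjoint_inner_right x x).symm
  rw [hT, _root_.neg_apply, inner_neg_right] at h
  linarith [real_inner_comm x (T x)]

theorem norm_smul_one_sub_apply_sq_of_star_eq_neg (hT : star T = -T) (ω : ℝ) (x : E) :
    ‖(ω • 1 - T) x‖ ^ 2 = ω ^ 2 * ‖x‖ ^ 2 + ‖T x‖ ^ 2 := by
  rw [_root_.sub_apply, _root_.smul_apply, one_apply_eq_self,
    norm_sub_sq_real, real_inner_smul_left, real_inner_comm,
    inner_apply_self_eq_zero_of_star_eq_neg hT, norm_smul, mul_pow, Real.norm_eq_abs, sq_abs]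
  ring

theorem norm_smul_one_sub_sq_of_star_eq_neg [Nontrivial E] (hT : star T = -T) (ω : ℝ) :
    ‖ω • 1 - T‖ ^ 2 = ω ^ 2 + ‖T‖ ^ 2 := by
  set A := ω • 1 - T
  have hA := norm_smul_one_sub_apply_sq_of_star_eq_neg hT ω
  have hωA : ω ^ 2 ≤ ‖A‖ ^ 2 := by
    obtain ⟨x, hx⟩ := exists_norm_eq E zero_le_one
    have := A.norm_apply_sq_le x
    rw [hA, hx] at this
    nlinarith [sq_nonneg ‖T x‖]
  apply le_antisymm
  · refine A.opNorm_sq_le_of_forall_norm_sq_le (by positivity) fun x => ?_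
    rw [hA, add_mul]
    gcongr
    exact T.norm_apply_sq_le x
  · suffices ‖T‖ ^ 2 ≤ ‖A‖ ^ 2 - ω ^ 2 by linarith
    refine T.opNorm_sq_le_of_forall_norm_sq_le (by linarith) fun x => ?_
    have := A.norm_apply_sq_le x
    rw [hA] at this
    linarith

end SkewAdjoint

namespace EuclideanSpace

variable {ι : Type*}

noncomputable def re (z : EuclideanSpace ℂ ι) : EuclideanSpace ℝ ι :=
  WithLp.toLp 2 fun i => (z i).re

noncomputable def im (z : EuclideanSpace ℂ ι) : EuclideanSpace ℝ ι :=
  WithLp.toLp 2 fun i => (z i).im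

noncomputable def ofReal (x : EuclideanSpace ℝ ι) : EuclideanSpace ℂ ι :=
  WithLp.toLp 2 fun i => (x i : ℂ)

@[simp]
theorem re_ofReal (x : EuclideanSpace ℝ ι) : re (ofReal x) = x := by
  ext i; simp [re, ofReal]

@[simp]
theorem im_ofReal (x : EuclideanSpace ℝ ι) : im (ofReal x) = 0 := by
  ext i; simp [im, ofReal]

theorem norm_sq_eq_norm_re_sq_add_norm_im_sq [Fintype ι] (z : EuclideanSpace ℂ ι) :
    ‖z‖ ^ 2 = ‖re z‖ ^ 2 + ‖im z‖ ^ 2 := by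
  simp only [EuclideanSpace.norm_sq_eq, ← Finset.sum_add_distrib, Complex.sq_norm,
    Complex.normSq_apply, re, im, Real.norm_eq_abs, sq_abs]
  ring_nf

end EuclideanSpace

namespace Matrix

open EuclideanSpace

variable {ι : Type*} [Fintype ι] [DecidableEq ι] (M : Matrix ι ι ℝ)

theorem re_toEuclideanCLM_map_ofReal (z : EuclideanSpace ℂ ι) :
    re (toEuclideanCLM (𝕜 := ℂ) (M.map (↑)) z) = toEuclideanCLM (𝕜 := ℝ) M (re z) := by
  ext i
  simp [re, mulVec, dotProduct, Complex.re_sum]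

theorem im_toEuclideanCLM_map_ofReal (z : EuclideanSpace ℂ ι) :
    im (toEuclideanCLM (𝕜 := ℂ) (M.map (↑)) z) = toEuclideanCLM (𝕜 := ℝ) M (im z) := by
  ext i
  simp [im, mulVec, dotProduct, Complex.im_sum]

theorem norm_toEuclideanCLM_map_ofReal :
    ‖toEuclideanCLM (𝕜 := ℂ) (M.map (↑))‖ = ‖toEuclideanCLM (𝕜 := ℝ) M‖ := by
  rw [← sq_eq_sq₀ (norm_nonneg _) (norm_nonneg _)]
  apply le_antisymm
  · refine ContinuousLinearMap.opNorm_sq_le_of_forall_norm_sq_le _ (by positivity) fun z => ?_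
    rw [norm_sq_eq_norm_re_sq_add_norm_im_sq, norm_sq_eq_norm_re_sq_add_norm_im_sq z,
      re_toEuclideanCLM_map_ofReal, im_toEuclideanCLM_map_ofReal, mul_add]
    exact add_le_add (ContinuousLinearMap.norm_apply_sq_le _ _)
      (ContinuousLinearMap.norm_apply_sq_le _ _)
  · refine ContinuousLinearMap.opNorm_sq_le_of_forall_norm_sq_le _ (by positivity) fun x => ?_
    simpa [norm_sq_eq_norm_re_sq_add_norm_im_sq, re_toEuclideanCLM_map_ofReal,
      im_toEuclideanCLM_map_ofReal] using
      ContinuousLinearMap.norm_apply_sq_le (toEuclideanCLM (𝕜 := ℂ) (M.map (↑))) (ofReal x)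

end Matrix

theorem IsStarNormal.norm_eq_of_isGreatest {A : Type*} [CStarAlgebra A] {a : A} [IsStarNormal a]
    {r : ℝ} (h : IsGreatest ((‖·‖) '' spectrum ℂ a) r) : ‖a‖ = r := by
  refine IsGreatest.unique ⟨?_, ?_⟩ h
  · obtain ⟨k, hk, hka⟩ := spectrum.exists_nnnorm_eq_spectralRadius_of_nonempty h.nonempty.of_image
    rw [IsStarNormal.spectralRadius_eq_nnnorm, ENNReal.coe_inj] at hka
    exact ⟨k, hk, congrArg NNReal.toReal hka⟩
  · rintro _ ⟨k, hk, rfl⟩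
    have : (‖k‖₊ : ENNReal) ≤ ‖a‖₊ :=
      IsStarNormal.spectralRadius_eq_nnnorm a ▸ le_iSup₂ (α := ENNReal) k hk
    exact_mod_cast this

theorem stmt19_general {n : ℕ} (S : Matrix (Fin n) (Fin n) ℝ) (hskew : Sᵀ = -S)
    (mumax : ℝ)
    (hmu : IsGreatest ((fun z : ℂ => ‖z‖) ''
      spectrum ℂ (S.map ((↑) : ℝ → ℂ))) mumax)
    (ω : ℝ) :
    spec (ω • (1 : Matrix (Fin n) (Fin n) ℝ) - S) = Real.sqrt (ω ^ 2 + mumax ^ 2) := by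
  have : Nonempty (Fin n) := by
    by_contra h
    rw [not_nonempty_iff] at h
    simpa [spectrum.of_subsingleton] using hmu.nonempty.of_image
  have hS : star (toEuclideanCLM (𝕜 := ℝ) S) = -toEuclideanCLM (𝕜 := ℝ) S := by
    rw [← map_star, star_eq_conjTranspose, conjTranspose_eq_transpose_of_trivial, hskew, map_neg]
  have hSC : star (S.map ((↑) : ℝ → ℂ)) = -S.map ((↑) : ℝ → ℂ) := by
    rw [star_eq_conjTranspose, ← conjTranspose_map _ fun _ => (Complex.conj_ofReal _).symm,
      conjTranspose_eq_transpose_of_trivial, hskew, Matrix.map_neg _ Complex.ofReal_neg]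
  have : IsStarNormal (toEuclideanCLM (𝕜 := ℂ) (S.map ((↑) : ℝ → ℂ))) :=
    skewAdjoint.isStarNormal_of_mem (by rw [skewAdjoint.mem_iff, ← map_star, hSC, map_neg])
  have hnorm : ‖toEuclideanCLM (𝕜 := ℝ) S‖ = mumax := by
    rw [← norm_toEuclideanCLM_map_ofReal]
    exact IsStarNormal.norm_eq_of_isGreatest (by rwa [AlgEquiv.spectrum_eq])
  rw [spec, map_sub, map_smul, map_one, ← hnorm, ← norm_smul_one_sub_sq_of_star_eq_neg hS,
    Real.sqrt_sq (norm_nonneg _)]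

theorem stmt19 {n : ℕ} (S : Matrix (Fin n) (Fin n) ℝ) (hskew : Sᵀ = -S)
    (mumax : ℝ)
    (hmu : IsGreatest ((fun z : ℂ => ‖z‖) ''
      spectrum ℂ (S.map ((↑) : ℝ → ℂ))) mumax)
    (ω : ℝ) (hω : 0 < ω) :
    spec (ω • (1 : Matrix (Fin n) (Fin n) ℝ) - S) = Real.sqrt (ω ^ 2 + mumax ^ 2) :=
  stmt19_general S hskew mumax hmu ω
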